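/- arXiv:2007.10792 — 6 statements merged into one kernel-verified Lean document; each statement's English description precedes it below -/
import Mathlib

section
/- Let G be an abelian group and M ⊆ G a finitely generated sharp submonoid (M ∩ (−M) = {0}). Then there exists an additive monoid homomorphism u : M → ℕ such that u(m) = 0 implies m = 0. -/
/-!
Tensoring with `ℚ` kills exactly the torsion of `G`, and sharpness of `M` rules out any nontrivial
nonnegative rational relation among the images in `ℚ ⊗ G` of the nonzero generators of `M`. By
Gordan's theorem some linear form is then positive on all of these images; clearing denominators
turns it into an additive map `M → ℕ` that is positive on the generators, hence on every nonzero
element of `M`.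
-/

open Finset TensorProduct

section Gordan

variable {𝕜 V : Type*} [Field 𝕜] [LinearOrder 𝕜] [IsStrictOrderedRing 𝕜]
  [AddCommGroup V] [Module 𝕜 V]

theorem exists_dual_forall_pos_of_fin {n : ℕ} (v : Fin n → V)
    (hv : ∀ c : Fin n → 𝕜, (∀ i, 0 ≤ c i) → ∑ i, c i • v i = 0 → c = 0) :
    ∃ ℓ : Module.Dual 𝕜 V, ∀ i, 0 < ℓ (v i) := by
  induction n generalizing V with
  | zero => exact ⟨0, finZeroElim⟩
  | succ n ih =>
    set z := v 0
    have hv_cons : ∀ (a : 𝕜) (c : Fin n → 𝕜), 0 ≤ a → (∀ i, 0 ≤ c i) →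
        a • z + ∑ i, c i • v i.succ = 0 → a = 0 ∧ c = 0 := by
      intro a c ha hc h
      have hac := hv (Fin.cons a c) (Fin.cases ha hc) (by simpa [Fin.sum_univ_succ] using h)
      exact ⟨by simpa using congr_fun hac 0, funext fun i => by simpa using congr_fun hac i.succ⟩
    -- Either a nonnegative combination of the other vectors lies on the line through `z`, and
    -- then it is a positive multiple of `z`; or there is none, and the induction hypothesis
    -- applies in `V ⧸ 𝕜 ∙ z`.
    by_cases hcone : ∃ c : Fin n → 𝕜, (∀ i, 0 ≤ c i) ∧ c ≠ 0 ∧ ∑ i, c i • v i.succ ∈ 𝕜 ∙ z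
    · obtain ⟨c, hc, hc0, hcz⟩ := hcone
      obtain ⟨μ, hμz⟩ := Submodule.mem_span_singleton.1 hcz
      obtain ⟨ℓ, hℓ⟩ := ih (fun i => v i.succ) fun c hc h =>
        (hv_cons 0 c le_rfl hc (by simpa using h)).2
      have hμ : 0 < μ := by
        by_contra! hμ
        exact hc0 (hv_cons (-μ) c (neg_nonneg.2 hμ) hc (by rw [← hμz, neg_smul, neg_add_cancel])).2
      have hμℓ : 0 < μ * ℓ z := by
        obtain ⟨i, hi⟩ := Function.ne_iff.1 hc0
        rw [← smul_eq_mul, ← map_smul, hμz, map_sum]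
        refine sum_pos' (fun j _ => ?_) ⟨i, mem_univ i, ?_⟩
        · simpa using mul_nonneg (hc j) (hℓ j).le
        · simpa using mul_pos ((hc i).lt_of_ne' hi) (hℓ i)
      exact ⟨ℓ, Fin.cases (pos_of_mul_pos_right hμℓ hμ.le) hℓ⟩
    · push Not at hcone
      obtain ⟨ℓ₀, hℓ₀⟩ := ih (fun i => (𝕜 ∙ z).mkQ (v i.succ)) fun c hc h => by
        by_contra hc0
        refine hcone c hc hc0 ?_
        rw [← Submodule.Quotient.mk_eq_zero, ← Submodule.mkQ_apply, map_sum]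
        simpa using h
      have hz : z ≠ 0 := fun h =>
        one_ne_zero (hv_cons 1 0 zero_le_one (fun _ => le_rfl) (by simp [h])).1
      obtain ⟨φ, hφ⟩ := Module.Projective.exists_dual_eq_one 𝕜 hz
      obtain ⟨t, ht⟩ : ∃ t : 𝕜, ∀ i : Fin n, -φ (v i.succ) / ℓ₀ ((𝕜 ∙ z).mkQ (v i.succ)) < t :=
        (Filter.eventually_all.2 fun i => Filter.eventually_gt_atTop _).exists
      refine ⟨t • ℓ₀ ∘ₗ (𝕜 ∙ z).mkQ + φ, Fin.cases ?_ fun i => ?_⟩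
      · have hzq : (𝕜 ∙ z).mkQ z = 0 :=
          (Submodule.Quotient.mk_eq_zero _).2 (Submodule.mem_span_singleton_self z)
        change 0 < t * ℓ₀ ((𝕜 ∙ z).mkQ z) + φ z
        simp [hzq, hφ]
      · have := (div_lt_iff₀ (hℓ₀ i)).1 (ht i)
        simp only [LinearMap.add_apply, LinearMap.smul_apply, LinearMap.comp_apply, smul_eq_mul]
        linarith

theorem exists_dual_forall_pos {ι : Type*} [Fintype ι] (v : ι → V)
    (hv : ∀ c : ι → 𝕜, (∀ i, 0 ≤ c i) → ∑ i, c i • v i = 0 → c = 0) :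
    ∃ ℓ : Module.Dual 𝕜 V, ∀ i, 0 < ℓ (v i) := by
  let e := Fintype.equivFin ι
  obtain ⟨ℓ, hℓ⟩ := exists_dual_forall_pos_of_fin (v ∘ e.symm) fun c hc h => by
    have hce := hv (c ∘ e) (fun i => hc (e i)) (by rw [← h, ← e.symm.sum_comp]; simp)
    ext j
    simpa using congr_fun hce (e.symm j)
  exact ⟨ℓ, fun i => by simpa using hℓ (e i)⟩

end Gordan

theorem exists_pos_nat_mul_eq_natCast {ι : Type*} [Fintype ι] (q : ι → ℚ) (hq : ∀ i, 0 ≤ q i) :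
    ∃ D : ℕ, 0 < D ∧ ∀ i, ∃ n : ℕ, (D : ℚ) * q i = n := by
  refine ⟨∏ i, (q i).den, prod_pos fun i _ => (q i).den_pos, fun i => ?_⟩
  obtain ⟨k, hk⟩ := dvd_prod_of_mem (fun i => (q i).den) (mem_univ i)
  refine ⟨k * (q i).num.toNat, ?_⟩
  have hnum : (((q i).num.toNat : ℤ) : ℚ) = (q i).num := by
    rw [Int.toNat_of_nonneg (Rat.num_nonneg.2 (hq i))]
  rw [hk, Nat.cast_mul, mul_comm ((q i).den : ℚ), mul_assoc, Rat.den_mul_eq_num, Nat.cast_mul,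
    ← hnum, Int.cast_natCast]

theorem AddMonoidHom.exists_natCast_apply_eq {A R : Type*} [AddMonoid A] [AddMonoidWithOne R]
    [CharZero R] (f : A →+ R) (hf : ∀ x, ∃ n : ℕ, f x = n) :
    ∃ u : A →+ ℕ, ∀ x, (u x : R) = f x := by
  choose u hu using hf
  refine ⟨{ toFun := u, map_zero' := ?_, map_add' := fun x y => ?_ }, fun x => (hu x).symm⟩
  · exact Nat.cast_injective (R := R) (by rw [← hu, map_zero, Nat.cast_zero])
  · exact Nat.cast_injective (R := R) (by rw [Nat.cast_add, ← hu, ← hu, ← hu, map_add])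

theorem AddSubmonoid.map_pos_of_mem_closure {A N : Type*} [AddZeroClass A] [AddZeroClass N]
    [Preorder N] [AddLeftStrictMono N] {s : Set A} (f : A →+ N)
    (hs : ∀ g ∈ s, g ≠ 0 → 0 < f g) {x : A} (hx : x ∈ closure s) (hx0 : x ≠ 0) : 0 < f x := by
  suffices ∀ x ∈ closure s, x = 0 ∨ 0 < f x from (this x hx).resolve_left hx0
  intro x hx
  induction hx using closure_induction with
  | mem g hg => exact or_iff_not_imp_left.2 (hs g hg)
  | zero => exact .inl rfl
  | add y z _ _ hy hz =>
    rcases hy with rfl | hy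
    · simpa using hz
    rcases hz with rfl | hz
    · simpa using Or.inr hy
    exact .inr (by simpa using add_pos hy hz)

theorem AddSubmonoid.exists_natCast_eq_of_mem_closure {A R : Type*} [AddMonoid A]
    [AddMonoidWithOne R] {s : Set A} (f : A →+ R) (hs : ∀ g ∈ s, ∃ n : ℕ, f g = n) {x : A}
    (hx : x ∈ closure s) : ∃ n : ℕ, f x = n := by
  induction hx using closure_induction with
  | mem g hg => exact hs g hg
  | zero => exact ⟨0, by simp⟩
  | add x y _ _ hx hy =>
    obtain ⟨m, hm⟩ := hx
    obtain ⟨n, hn⟩ := hy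
    exact ⟨m + n, by simp [hm, hn]⟩

section Sharp

variable {G : Type*} [AddCommGroup G] {M : AddSubmonoid G}

theorem eq_zero_of_add_eq_zero_of_sharp (hM : ∀ g ∈ M, -g ∈ M → g = 0) {x y : G}
    (hx : x ∈ M) (hy : y ∈ M) (h : x + y = 0) : x = 0 :=
  hM x hx (neg_eq_of_add_eq_zero_right h ▸ hy)

theorem eq_zero_of_nsmul_eq_zero_of_sharp (hM : ∀ g ∈ M, -g ∈ M → g = 0) {x : G} (hx : x ∈ M)
    {k : ℕ} (hk : k ≠ 0) (h : k • x = 0) : x = 0 := by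
  obtain ⟨k, rfl⟩ := Nat.exists_eq_succ_of_ne_zero hk
  exact eq_zero_of_add_eq_zero_of_sharp hM hx (M.nsmul_mem hx k) (by rwa [add_comm, ← succ_nsmul])

theorem eq_zero_of_sum_eq_zero_of_sharp (hM : ∀ g ∈ M, -g ∈ M → g = 0) {ι : Type*}
    {s : Finset ι} {x : ι → G} (hx : ∀ i ∈ s, x i ∈ M) (h : ∑ i ∈ s, x i = 0) :
    ∀ i ∈ s, x i = 0 := by
  classical
  exact fun i hi => eq_zero_of_add_eq_zero_of_sharp hM (hx i hi)
    (M.sum_mem fun j hj => hx j (mem_of_mem_erase hj)) (by rwa [add_sum_erase s x hi])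

theorem eq_zero_of_one_tmul_eq_zero_of_sharp (hM : ∀ g ∈ M, -g ∈ M → g = 0) {x : G}
    (hx : x ∈ M) (h : (1 : ℚ) ⊗ₜ[ℤ] x = 0) : x = 0 := by
  obtain ⟨k, hk⟩ :=
    (IsLocalizedModule.eq_zero_iff (nonZeroDivisors ℤ) (TensorProduct.mk ℤ ℚ G 1)).1 h
  exact eq_zero_of_nsmul_eq_zero_of_sharp hM hx
    (Int.natAbs_ne_zero.2 (nonZeroDivisors.coe_ne_zero k)) (natAbs_nsmul_eq_zero.2 hk)

theorem eq_zero_of_sum_smul_one_tmul_eq_zero_of_sharp (hM : ∀ g ∈ M, -g ∈ M → g = 0)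
    {ι : Type*} [Fintype ι] {g : ι → G} (hgM : ∀ i, g i ∈ M) (hg0 : ∀ i, g i ≠ 0)
    (c : ι → ℚ) (hc : ∀ i, 0 ≤ c i) (h : ∑ i, c i • (1 : ℚ) ⊗ₜ[ℤ] g i = 0) : c = 0 := by
  obtain ⟨D, hD, hDc⟩ := exists_pos_nat_mul_eq_natCast c hc
  choose n hn using hDc
  have hsum : ∑ i, n i • g i = 0 := by
    refine eq_zero_of_one_tmul_eq_zero_of_sharp hM (M.sum_mem fun i _ => M.nsmul_mem (hgM i) _) ?_
    calc (1 : ℚ) ⊗ₜ[ℤ] ∑ i, n i • g i = (D : ℚ) • ∑ i, c i • (1 : ℚ) ⊗ₜ[ℤ] g i := by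
          simp [tmul_sum, smul_sum, smul_smul, ← Nat.cast_smul_eq_nsmul ℚ, hn]
      _ = 0 := by rw [h, smul_zero]
  have hn0 : ∀ i, n i = 0 := fun i => by
    by_contra hni
    exact hg0 i (eq_zero_of_nsmul_eq_zero_of_sharp hM (hgM i) hni
      (eq_zero_of_sum_eq_zero_of_sharp hM (fun i _ => M.nsmul_mem (hgM i) _) hsum i (mem_univ i)))
  ext i
  simpa [hn0, hD.ne'] using hn i

end Sharp

/-- A finitely generated sharp submonoid `M` of an abelian group `G` admits a
monoid homomorphism `u : M → ℕ` with `u m = 0 → m = 0` (a local homomorphism to `ℕ`). -/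
theorem exists_local_hom_to_nat {G : Type*} [AddCommGroup G] (M : AddSubmonoid G)
    (hfg : M.FG) (hsharp : ∀ g ∈ M, -g ∈ M → g = 0) :
    ∃ u : M →+ ℕ, ∀ m : M, u m = 0 → m = 0 := by
  classical
  obtain ⟨s, rfl⟩ := hfg
  obtain ⟨ℓ, hℓ⟩ := exists_dual_forall_pos (𝕜 := ℚ) (fun g : s.erase 0 => (1 : ℚ) ⊗ₜ[ℤ] (g : G))
    (eq_zero_of_sum_smul_one_tmul_eq_zero_of_sharp hsharp
      (fun g => AddSubmonoid.subset_closure (mem_of_mem_erase g.2)) (fun g => ne_of_mem_erase g.2))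
  obtain ⟨D, hD, hDℓ⟩ := exists_pos_nat_mul_eq_natCast _ fun g => (hℓ g).le
  let F : G →+ ℚ := D • ℓ.toAddMonoidHom.comp (TensorProduct.mk ℤ ℚ G 1).toAddMonoidHom
  have hF_nat : ∀ g ∈ s, ∃ n : ℕ, F g = n := fun g hg => by
    by_cases hg0 : g = 0
    · exact ⟨0, by simp [hg0]⟩
    · simpa [F] using hDℓ ⟨g, mem_erase.2 ⟨hg0, hg⟩⟩
  have hF_pos : ∀ x ∈ AddSubmonoid.closure (s : Set G), x ≠ 0 → 0 < F x :=
    fun x => AddSubmonoid.map_pos_of_mem_closure F fun g hg hg0 => by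
      simpa [F] using mul_pos (Nat.cast_pos.2 hD) (hℓ ⟨g, mem_erase.2 ⟨hg0, hg⟩⟩)
  obtain ⟨u, hu⟩ := (F.comp (AddSubmonoid.closure (s : Set G)).subtype).exists_natCast_apply_eq
    fun x => AddSubmonoid.exists_natCast_eq_of_mem_closure F hF_nat x.2
  refine ⟨u, fun x hx => Subtype.ext (by_contra fun hx0 => (hF_pos x x.2 hx0).ne' ?_)⟩
  simpa [hx] using (hu x).symm
end

section
/- Let G be an abelian group, M ⊆ G a sharp submonoid (M ∩ (−M) = {0}), and F ⊆ M a face of M, i.e. a submonoid of M such that whenever a, b ∈ M and a + b ∈ F, then a ∈ F. Let L ∈ F and suppose x ∈ G satisfies x − n•L ∈ M and m•L − x ∈ M for some integers n, m (i.e. x is bounded by L for the order x ≤ y iff y − x ∈ M). Then x belongs to the subgroup of G generated by F. -/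
/-! Adding a large enough multiple of `L` to `m • L - x` turns the bound into a decomposition
`(x - n • L) + b = N • L` with `b ∈ M` and `N ≥ 0`; as `N • L ∈ F`, the face property puts
`x - n • L` in `F`, and `x = (x - n • L) + n • L`. -/

namespace AddSubmonoid

variable {G : Type*} [AddCommGroup G]

theorem zsmul_mem_of_nonneg (F : AddSubmonoid G) {L : G} (hL : L ∈ F) {k : ℤ} (hk : 0 ≤ k) :
    k • L ∈ F := by
  lift k to ℕ using hk
  rw [natCast_zsmul]
  exact F.nsmul_mem hL k

theorem mem_face_of_zsmul_sub_mem {M F : AddSubmonoid G} (hFM : F ≤ M)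
    (hface : ∀ a ∈ M, ∀ b ∈ M, a + b ∈ F → a ∈ F) {L : G} (hL : L ∈ F)
    {y : G} {k : ℤ} (hy : y ∈ M) (hyk : k • L - y ∈ M) : y ∈ F := by
  have hshift : ((k.natAbs : ℤ) - k) • L ∈ F :=
    F.zsmul_mem_of_nonneg hL (sub_nonneg.2 Int.le_natAbs)
  have hsum : y + ((k • L - y) + ((k.natAbs : ℤ) - k) • L) = (k.natAbs : ℤ) • L := by
    rw [sub_smul]; abel
  refine hface y hy _ (M.add_mem hyk (hFM hshift)) ?_
  rw [hsum]
  exact F.zsmul_mem_of_nonneg hL (Int.natCast_nonneg _)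

end AddSubmonoid

theorem bounded_by_face_mem_closure_general {G : Type*} [AddCommGroup G] (M : AddSubmonoid G)
    (F : AddSubmonoid G) (hFM : F ≤ M)
    (hface : ∀ a ∈ M, ∀ b ∈ M, a + b ∈ F → a ∈ F)
    (L : G) (hL : L ∈ F) (x : G) (n m : ℤ)
    (hn : x - n • L ∈ M) (hm : m • L - x ∈ M) :
    x ∈ AddSubgroup.closure (F : Set G) := by
  have hupper : (m - n) • L - (x - n • L) ∈ M := by
    rwa [sub_smul, sub_sub_sub_cancel_right]
  have hshifted : x - n • L ∈ F :=
    AddSubmonoid.mem_face_of_zsmul_sub_mem hFM hface hL hn hupper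
  rw [← sub_add_cancel x (n • L)]
  exact AddSubgroup.add_mem _ (AddSubgroup.subset_closure hshifted)
    (AddSubgroup.zsmul_mem _ (AddSubgroup.subset_closure hL) n)

/-- Let `M` be a sharp submonoid of an abelian group `G` and `F ⊆ M` a face of
`M`.  If `L ∈ F` and `x ∈ G` is bounded by `L` (i.e. `n • L ≤ x ≤ m • L` for some integers
`n, m`, where `x ≤ y ↔ y - x ∈ M`), then `x` lies in the subgroup of `G` generated by `F`. -/
theorem bounded_by_face_mem_closure {G : Type*} [AddCommGroup G] (M : AddSubmonoid G)
    (hsharp : ∀ g ∈ M, -g ∈ M → g = 0)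
    (F : AddSubmonoid G) (hFM : F ≤ M)
    (hface : ∀ a ∈ M, ∀ b ∈ M, a + b ∈ F → a ∈ F)
    (L : G) (hL : L ∈ F) (x : G) (n m : ℤ)
    (hn : x - n • L ∈ M) (hm : m • L - x ∈ M) :
    x ∈ AddSubgroup.closure (F : Set G) :=
  bounded_by_face_mem_closure_general M F hFM hface L hL x n m hn hm
end

section
/- For a tropical curve datum (V, E, s, t, G, M, ℓ) and every edge e ∈ E, the group homomorphism H₁ → G given by γ ↦ γ(e) • ℓ(e) has bounded monodromy: for every γ ∈ H₁ one has (−1)•⟨γ, γ⟩ ≤ γ(e)•ℓ(e) ≤ ⟨γ, γ⟩ (for the order x ≤ y iff y − x ∈ M). -/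
namespace TropicalNeron

variable {V E : Type*} [Fintype E]
variable {G : Type*} [AddCommGroup G]

open scoped Classical in
/-- The boundary map `δ : (E → ℤ) → (V → ℤ)` of a graph with source `s` and target `t`. -/
noncomputable def delta (s t : E → V) : (E → ℤ) →+ (V → ℤ) where
  toFun f := fun v => (∑ e, if t e = v then f e else 0) - ∑ e, if s e = v then f e else 0
  map_zero' := by funext v; simp
  map_add' f g := by
    classical
    funext v
    have h : ∀ w : E → V,
        (∑ e, if w e = v then (f + g) e else 0)
          = (∑ e, if w e = v then f e else 0) + ∑ e, if w e = v then g e else 0 := by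
      intro w
      rw [← Finset.sum_add_distrib]
      refine Finset.sum_congr rfl fun e _ => ?_
      by_cases hw : w e = v <;> simp [hw]
    simp only [Pi.add_apply] at *
    rw [h, h]
    ring

/-- The first homology of the graph: the kernel of the boundary map. -/
noncomputable def H1 (s t : E → V) : AddSubgroup (E → ℤ) := (delta s t).ker

/-- The monodromy pairing `⟨γ, γ'⟩ = ∑ e, γ(e)·γ'(e) • ℓ(e)`. -/
def pairing (ℓ : E → G) (γ γ' : E → ℤ) : G := ∑ e, (γ e * γ' e) • ℓ e

/-- Pairing with a fixed cycle `γ`, as a homomorphism `H₁ → G`. -/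
noncomputable def periodHom (s t : E → V) (ℓ : E → G) (γ : H1 s t) : ↥(H1 s t) →+ G where
  toFun γ' := pairing ℓ γ γ'
  map_zero' := by simp [pairing]
  map_add' γ₁ γ₂ := by
    simp only [pairing, AddSubgroup.coe_add, Pi.add_apply, mul_add, add_smul]
    rw [Finset.sum_add_distrib]

/-- The period map `H₁ → Hom(H₁, G)`, `γ ↦ ⟨γ, −⟩`. -/
noncomputable def periodMap (s t : E → V) (ℓ : E → G) : ↥(H1 s t) →+ (↥(H1 s t) →+ G) where
  toFun := periodHom s t ℓ
  map_zero' := by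
    ext γ'
    simp [periodHom, pairing]
  map_add' γ₁ γ₂ := by
    ext γ'
    simp only [periodHom, AddMonoidHom.coe_mk, ZeroHom.coe_mk, AddMonoidHom.add_apply,
      pairing, AddSubgroup.coe_add, Pi.add_apply, add_mul, add_smul]
    rw [Finset.sum_add_distrib]

/-- `a` is bounded by `b` for the order `x ≤ y ↔ y - x ∈ M`. -/
def Bounded (M : AddSubmonoid G) (b a : G) : Prop :=
  ∃ n m : ℤ, a - n • b ∈ M ∧ m • b - a ∈ M

/-- A homomorphism `φ : H₁ → G` has bounded monodromy if `φ(γ)` is bounded by `⟨γ,γ⟩`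
for every `γ ∈ H₁`. -/
def BoundedMonodromy (s t : E → V) (M : AddSubmonoid G) (ℓ : E → G)
    (φ : ↥(H1 s t) →+ G) : Prop :=
  ∀ γ : H1 s t, Bounded M (pairing ℓ γ γ) (φ γ)

/-- The subgroup `Hom(H₁,G)† ⊆ Hom(H₁,G)` of bounded-monodromy homomorphisms. -/
noncomputable def BMHom (s t : E → V) (M : AddSubmonoid G) (ℓ : E → G) :
    AddSubgroup (↥(H1 s t) →+ G) where
  carrier := {φ | BoundedMonodromy s t M ℓ φ}
  zero_mem' := fun γ => ⟨0, 0, by simpa using M.zero_mem, by simpa using M.zero_mem⟩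
  add_mem' := by
    rintro φ ψ hφ hψ γ
    obtain ⟨n, m, h1, h2⟩ := hφ γ
    obtain ⟨n', m', h1', h2'⟩ := hψ γ
    refine ⟨n + n', m + m', ?_, ?_⟩
    · have h := AddSubmonoid.add_mem _ h1 h1'
      have e : φ γ - n • pairing ℓ γ γ + (ψ γ - n' • pairing ℓ γ γ)
          = (φ + ψ) γ - (n + n') • pairing ℓ γ γ := by
        rw [AddMonoidHom.add_apply, add_smul]; abel
      rwa [e] at h
    · have h := AddSubmonoid.add_mem _ h2 h2'
      have e : m • pairing ℓ γ γ - φ γ + (m' • pairing ℓ γ γ - ψ γ)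
          = (m + m') • pairing ℓ γ γ - (φ + ψ) γ := by
        rw [AddMonoidHom.add_apply, add_smul]; abel
      rwa [e] at h
  neg_mem' := by
    rintro φ hφ γ
    obtain ⟨n, m, h1, h2⟩ := hφ γ
    refine ⟨-m, -n, ?_, ?_⟩
    · have e : m • pairing ℓ γ γ - φ γ = (-φ) γ - (-m) • pairing ℓ γ γ := by
        rw [AddMonoidHom.neg_apply, neg_smul]; abel
      rwa [e] at h2
    · have e : φ γ - n • pairing ℓ γ γ = (-n) • pairing ℓ γ γ - (-φ) γ := by
        rw [AddMonoidHom.neg_apply, neg_smul]; abel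
      rwa [e] at h1

/-- The subgroup of `Hom(H₁,G)†` of homomorphisms of the form `⟨γ, −⟩`. -/
noncomputable def periods (s t : E → V) (M : AddSubmonoid G) (ℓ : E → G) :
    AddSubgroup ↥(BMHom s t M ℓ) :=
  AddSubgroup.comap (BMHom s t M ℓ).subtype (periodMap s t ℓ).range

/-- The tropical Jacobian `TroPic⁰ = Hom(H₁,G)† / {⟨γ,−⟩ : γ ∈ H₁}`. -/
noncomputable abbrev TroPic0 (s t : E → V) (M : AddSubmonoid G) (ℓ : E → G) :=
  ↥(BMHom s t M ℓ) ⧸ periods s t M ℓ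

/-- The standard hypotheses on a tropical curve datum: `M` is a sharp, saturated,
generating submonoid of `G`, and all edge lengths lie in `M` and are nonzero. -/
def IsTropicalCurveDatum (s t : E → V) (M : AddSubmonoid G) (ℓ : E → G) : Prop :=
  (∀ g ∈ M, -g ∈ M → g = 0) ∧
  (∀ (g : G) (n : ℕ), 1 ≤ n → (n : ℤ) • g ∈ M → g ∈ M) ∧
  (∀ g : G, ∃ a ∈ M, ∃ b ∈ M, g = a - b) ∧
  (∀ e, ℓ e ∈ M) ∧
  (∀ e, ℓ e ≠ 0)

/-- Pairing with a single edge `e`: the homomorphism `H₁ → G`, `γ ↦ γ(e) • ℓ(e)`. -/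
noncomputable def edgeHom (s t : E → V) (ℓ : E → G) (e : E) : ↥(H1 s t) →+ G where
  toFun γ := (γ : E → ℤ) e • ℓ e
  map_zero' := by simp
  map_add' γ₁ γ₂ := by
    simp only [AddSubgroup.coe_add, Pi.add_apply, add_smul]

theorem zsmul_mem_of_nonneg {M : AddSubmonoid G} {g : G} (hg : g ∈ M) {n : ℤ} (hn : 0 ≤ n) :
    n • g ∈ M := by
  lift n to ℕ using hn
  rw [natCast_zsmul]
  exact M.nsmul_mem hg n

/-- Only the `e`-th term of `⟨γ, γ⟩ = ∑ γ(e')² • ℓ(e')` is affected, and it stays a nonnegative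
multiple of `ℓ e`. -/
theorem pairing_self_sub_zsmul_mem {M : AddSubmonoid G} {ℓ : E → G} (hℓ : ∀ e, ℓ e ∈ M)
    (γ : E → ℤ) (e : E) {c : ℤ} (hc : c ≤ γ e ^ 2) :
    pairing ℓ γ γ - c • ℓ e ∈ M := by
  classical
  have hsplit : pairing ℓ γ γ - c • ℓ e
      = (γ e * γ e - c) • ℓ e + ∑ e' ∈ Finset.univ.erase e, (γ e' * γ e') • ℓ e' := by
    rw [pairing, ← Finset.add_sum_erase _ _ (Finset.mem_univ e), sub_smul]
    abel
  rw [hsplit]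
  refine M.add_mem (zsmul_mem_of_nonneg (hℓ e) ?_) (M.sum_mem fun e' _ => ?_)
  · rw [← sq]
    exact sub_nonneg.2 hc
  · exact zsmul_mem_of_nonneg (hℓ e') (mul_self_nonneg _)

theorem edgeHom_boundedMonodromy_general {V E : Type*} [Fintype E]
    {G : Type*} [AddCommGroup G] (s t : E → V) (M : AddSubmonoid G) (ℓ : E → G)
    (hdatum : IsTropicalCurveDatum s t M ℓ) (e : E) :
    BoundedMonodromy s t M ℓ (edgeHom s t ℓ e) ∧
      ∀ γ : H1 s t,
        (γ : E → ℤ) e • ℓ e - (-1 : ℤ) • pairing ℓ γ γ ∈ M ∧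
        (1 : ℤ) • pairing ℓ γ γ - (γ : E → ℤ) e • ℓ e ∈ M := by
  obtain ⟨-, -, -, hℓ, -⟩ := hdatum
  have bounds : ∀ γ : H1 s t,
      (γ : E → ℤ) e • ℓ e - (-1 : ℤ) • pairing ℓ γ γ ∈ M ∧
      (1 : ℤ) • pairing ℓ γ γ - (γ : E → ℤ) e • ℓ e ∈ M := by
    intro γ
    have lower := pairing_self_sub_zsmul_mem hℓ γ e (c := -(γ : E → ℤ) e)
      (by simpa only [neg_sq] using Int.le_self_sq (-(γ : E → ℤ) e))
    have upper := pairing_self_sub_zsmul_mem hℓ γ e (Int.le_self_sq _)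
    rw [neg_smul, sub_neg_eq_add, add_comm] at lower
    rw [neg_one_smul, sub_neg_eq_add, one_smul]
    exact ⟨lower, upper⟩
  exact ⟨fun γ => ⟨-1, 1, bounds γ⟩, bounds⟩

/-- For a tropical curve datum and an edge `e`, the homomorphism
`γ ↦ γ(e) • ℓ(e)` has bounded monodromy; in fact
`(−1)•⟨γ,γ⟩ ≤ γ(e)•ℓ(e) ≤ 1•⟨γ,γ⟩` for every `γ ∈ H₁`. -/
theorem edgeHom_boundedMonodromy {V E : Type*} [Fintype V] [Fintype E] [Nonempty V]
    {G : Type*} [AddCommGroup G] (s t : E → V) (M : AddSubmonoid G) (ℓ : E → G)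
    (hG : AddGroup.FG G) (hdatum : IsTropicalCurveDatum s t M ℓ) (e : E) :
    BoundedMonodromy s t M ℓ (edgeHom s t ℓ e) ∧
      ∀ γ : H1 s t,
        (γ : E → ℤ) e • ℓ e - (-1 : ℤ) • pairing ℓ γ γ ∈ M ∧
        (1 : ℤ) • pairing ℓ γ γ - (γ : E → ℤ) e • ℓ e ∈ M :=
  edgeHom_boundedMonodromy_general s t M ℓ hdatum e

end TropicalNeron
end

section
/- For a tropical curve datum (V, E, s, t, G, M, ℓ), if γ ∈ H₁ satisfies ⟨γ, γ⟩ = 0 then γ = 0. Consequently, the group homomorphism H₁ → Hom(H₁, G) sending γ to ⟨γ, −⟩ is injective, i.e. the monodromy pairing is nondegenerate. -/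
namespace TropicalNeron

variable {V E : Type*} [Fintype E]
variable {G : Type*} [AddCommGroup G]

section SharpSubmonoid

variable {M : AddSubmonoid G}

theorem eq_zero_of_sum_eq_zero_of_sharp (hsharp : ∀ g ∈ M, -g ∈ M → g = 0) {ι : Type*}
    {s : Finset ι} {f : ι → G} (hf : ∀ i ∈ s, f i ∈ M) (hs : ∑ i ∈ s, f i = 0) {i : ι}
    (hi : i ∈ s) : f i = 0 := by
  classical
  refine hsharp _ (hf i hi) ?_
  rw [← Finset.add_sum_erase s f hi, add_eq_zero_iff_neg_eq] at hs
  exact hs ▸ M.sum_mem fun j hj => hf j (Finset.mem_of_mem_erase hj)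

theorem eq_zero_of_nsmul_eq_zero_of_sharp_of_saturated (hsharp : ∀ g ∈ M, -g ∈ M → g = 0)
    (hsat : ∀ (g : G) (n : ℕ), 1 ≤ n → (n : ℤ) • g ∈ M → g ∈ M) {g : G} (hg : g ∈ M)
    {n : ℕ} (hn : n ≠ 0) (h : n • g = 0) : g = 0 := by
  refine hsharp g hg (hsat (-g) n (Nat.one_le_iff_ne_zero.2 hn) ?_)
  rw [natCast_zsmul, smul_neg, h, neg_zero]
  exact M.zero_mem

end SharpSubmonoid

theorem pairing_self (ℓ : E → G) (γ : E → ℤ) : pairing ℓ γ γ = ∑ e, (γ e).natAbs ^ 2 • ℓ e := by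
  refine Finset.sum_congr rfl fun e _ => ?_
  rw [← natCast_zsmul, Nat.cast_pow, Int.natAbs_sq, sq]

/-- Each term `γ(e)² • ℓ(e)` of `⟨γ, γ⟩` lies in `M`, so sharpness forces every term to vanish,
and saturation then forces `γ(e) = 0` since `ℓ(e) ≠ 0`. -/
theorem eq_zero_of_pairing_self_eq_zero {M : AddSubmonoid G} {ℓ : E → G}
    (hsharp : ∀ g ∈ M, -g ∈ M → g = 0)
    (hsat : ∀ (g : G) (n : ℕ), 1 ≤ n → (n : ℤ) • g ∈ M → g ∈ M)
    (hℓM : ∀ e, ℓ e ∈ M) (hℓ : ∀ e, ℓ e ≠ 0) {γ : E → ℤ} (h : pairing ℓ γ γ = 0) : γ = 0 := by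
  rw [pairing_self] at h
  funext e
  have hterm : (γ e).natAbs ^ 2 • ℓ e = 0 := eq_zero_of_sum_eq_zero_of_sharp hsharp
    (fun e _ => M.nsmul_mem (hℓM e) _) h (Finset.mem_univ e)
  by_contra he
  exact hℓ e (eq_zero_of_nsmul_eq_zero_of_sharp_of_saturated hsharp hsat (hℓM e)
    (pow_ne_zero 2 (Int.natAbs_ne_zero.2 he)) hterm)

theorem monodromy_pairing_nondegenerate_general {V E : Type*} [Fintype E]
    {G : Type*} [AddCommGroup G] (s t : E → V) (M : AddSubmonoid G) (ℓ : E → G)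
    (hdatum : IsTropicalCurveDatum s t M ℓ) :
    (∀ γ : H1 s t, pairing ℓ (γ : E → ℤ) (γ : E → ℤ) = 0 → γ = 0) ∧
      Function.Injective (periodMap s t ℓ) := by
  obtain ⟨hsharp, hsat, -, hℓM, hℓ⟩ := hdatum
  have hnondeg : ∀ γ : H1 s t, pairing ℓ (γ : E → ℤ) (γ : E → ℤ) = 0 → γ = 0 := fun γ hγ =>
    Subtype.ext (eq_zero_of_pairing_self_eq_zero hsharp hsat hℓM hℓ hγ)
  refine ⟨hnondeg, (injective_iff_map_eq_zero _).2 fun γ hγ => hnondeg γ ?_⟩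
  exact DFunLike.congr_fun hγ γ

/-- For a tropical curve datum, `⟨γ,γ⟩ = 0` implies `γ = 0`; consequently the
period map `γ ↦ ⟨γ,−⟩ : H₁ → Hom(H₁, G)` is injective (the monodromy pairing is
nondegenerate). -/
theorem monodromy_pairing_nondegenerate {V E : Type*} [Fintype V] [Fintype E] [Nonempty V]
    {G : Type*} [AddCommGroup G] (s t : E → V) (M : AddSubmonoid G) (ℓ : E → G)
    (hG : AddGroup.FG G) (hdatum : IsTropicalCurveDatum s t M ℓ) :
    (∀ γ : H1 s t, pairing ℓ (γ : E → ℤ) (γ : E → ℤ) = 0 → γ = 0) ∧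
      Function.Injective (periodMap s t ℓ) :=
  monodromy_pairing_nondegenerate_general s t M ℓ hdatum

end TropicalNeron
end

section
/- Consider a tropical curve datum with G = ℤ and M = ℕ, so ℓ : E → ℤ satisfies ℓ(e) ≥ 1 for every edge e. Then every group homomorphism H₁ → ℤ has bounded monodromy, and the tropical Jacobian TroPic⁰ = Hom(H₁, ℤ)/{⟨γ, −⟩ : γ ∈ H₁} is a finite group. -/
namespace TropicalNeron

variable {V E : Type*} [Fintype E]
variable {G : Type*} [AddCommGroup G]

/-- The submonoid `ℕ ⊆ ℤ` of nonnegative integers. -/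
def intNonneg : AddSubmonoid ℤ where
  carrier := {x : ℤ | 0 ≤ x}
  zero_mem' := by simp [Set.mem_setOf_eq]
  add_mem' := fun {a b} ha hb => show 0 ≤ a + b from add_nonneg (show 0 ≤ a from ha) (show 0 ≤ b from hb)

/-!
Since every edge length is positive, the monodromy pairing is positive definite on `H₁`. Hence
`⟨γ, γ⟩ ≥ 1` for every cycle `γ ≠ 0`, so `φ(γ)` lies between `∓|φ(γ)| • ⟨γ, γ⟩`, and the period
map `H₁ → Hom(H₁, ℤ)` is injective. An injection between free abelian groups of the same finite
rank has finite cokernel, and `TroPic⁰` is a quotient of that cokernel.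
-/

lemma mem_intNonneg {x : ℤ} : x ∈ intNonneg ↔ 0 ≤ x := Iff.rfl

lemma bounded_zero (M : AddSubmonoid G) (b : G) : Bounded M b 0 :=
  ⟨0, 0, by simp [M.zero_mem], by simp [M.zero_mem]⟩

lemma bounded_intNonneg_of_pos {b : ℤ} (hb : 0 < b) (a : ℤ) : Bounded intNonneg b a := by
  refine ⟨-|a|, |a|, ?_, ?_⟩ <;>
  · rw [mem_intNonneg, smul_eq_mul]
    nlinarith [abs_nonneg a, le_abs_self a, neg_abs_le a]

section Ordered

variable [PartialOrder G] [IsOrderedCancelAddMonoid G] {ℓ : E → G}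

lemma pairing_self_pos (hℓ : ∀ e, 0 < ℓ e) {γ : E → ℤ} (hγ : γ ≠ 0) : 0 < pairing ℓ γ γ := by
  obtain ⟨e, he⟩ := Function.ne_iff.mp hγ
  exact Finset.sum_pos' (fun i _ => zsmul_nonneg (hℓ i).le (mul_self_nonneg _))
    ⟨e, Finset.mem_univ e, zsmul_pos (hℓ e) (mul_self_pos.mpr he)⟩

lemma periodMap_injective (s t : E → V) (hℓ : ∀ e, 0 < ℓ e) :
    Function.Injective (periodMap s t ℓ) := by
  refine (injective_iff_map_eq_zero _).mpr fun γ hγ => ?_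
  by_contra hne
  have hpos := pairing_self_pos hℓ (fun h => hne (Subtype.ext h) : (γ : E → ℤ) ≠ 0)
  exact hpos.ne' (DFunLike.congr_fun hγ γ)

end Ordered

instance instFiniteH1 (s t : E → V) : Module.Finite ℤ (H1 s t) :=
  inferInstanceAs (Module.Finite ℤ (H1 s t).toIntSubmodule)

lemma finite_dual_quotient_range_of_injective {A : Type*} [AddCommGroup A] [Module.Free ℤ A]
    [Module.Finite ℤ A] {f : A →+ (A →+ ℤ)} (hf : Function.Injective f) :
    Finite ((A →+ ℤ) ⧸ f.range) := by
  have hrank : Module.finrank ℤ (LinearMap.range f.toIntLinearMap) =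
      Module.finrank ℤ (A →+ ℤ) := by
    rw [LinearMap.finrank_range_of_inj hf, (addMonoidHomLequivInt ℤ).finrank_eq,
      Module.finrank_linearMap_self]
  exact Submodule.finiteQuotientOfFreeOfRankEq (LinearMap.range f.toIntLinearMap) hrank

lemma finite_troPic0_of_forall_boundedMonodromy (s t : E → V) (M : AddSubmonoid G) (ℓ : E → G)
    (hbm : ∀ φ : ↥(H1 s t) →+ G, BoundedMonodromy s t M ℓ φ)
    [Finite ((↥(H1 s t) →+ G) ⧸ (periodMap s t ℓ).range)] :
    Finite (TroPic0 s t M ℓ) := by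
  let incl := (AddMonoidHom.id _).codRestrict (BMHom s t M ℓ) hbm
  refine Finite.of_surjective
    (QuotientAddGroup.map (periodMap s t ℓ).range (periods s t M ℓ) incl ?_) ?_
  · rintro _ ⟨γ, rfl⟩
    exact ⟨γ, rfl⟩
  · rintro ⟨φ⟩
    exact ⟨(φ : ↥(H1 s t) →+ G), rfl⟩

lemma boundedMonodromy_of_pos (s t : E → V) {ℓ : E → ℤ} (hℓ : ∀ e, 0 < ℓ e)
    (φ : ↥(H1 s t) →+ ℤ) : BoundedMonodromy s t intNonneg ℓ φ := by
  intro γ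
  by_cases hγ : γ = 0
  · subst hγ
    simpa using bounded_zero intNonneg (pairing ℓ (0 : H1 s t) (0 : H1 s t))
  · exact bounded_intNonneg_of_pos (pairing_self_pos hℓ (by simpa using hγ)) _

theorem troPic0_finite_of_int_general {V E : Type*} [Fintype E]
    (s t : E → V) (ℓ : E → ℤ) (hℓ : ∀ e, 1 ≤ ℓ e) :
    (∀ φ : ↥(H1 s t) →+ ℤ, BoundedMonodromy s t intNonneg ℓ φ) ∧
      Finite (TroPic0 s t intNonneg ℓ) := by
  have hbm := boundedMonodromy_of_pos s t hℓ
  have := finite_dual_quotient_range_of_injective (f := periodMap s t ℓ)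
    (periodMap_injective s t hℓ)
  exact ⟨hbm, finite_troPic0_of_forall_boundedMonodromy s t intNonneg ℓ hbm⟩

/-- For a tropical curve datum with `G = ℤ` and `M = ℕ` (so every edge length
satisfies `ℓ(e) ≥ 1`), every group homomorphism `H₁ → ℤ` has bounded monodromy, and the
tropical Jacobian `Hom(H₁,ℤ)/{⟨γ,−⟩ : γ ∈ H₁}` is a finite group. -/
theorem troPic0_finite_of_int {V E : Type*} [Fintype V] [Fintype E] [Nonempty V]
    (s t : E → V) (ℓ : E → ℤ) (hℓ : ∀ e, 1 ≤ ℓ e) :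
    (∀ φ : ↥(H1 s t) →+ ℤ, BoundedMonodromy s t intNonneg ℓ φ) ∧
      Finite (TroPic0 s t intNonneg ℓ) :=
  troPic0_finite_of_int_general s t ℓ hℓ

end TropicalNeron
end

section
/- Let (V, E, s, t) be a finite connected graph and consider the tropical curve datum with G = (E → ℤ), M = (E → ℕ), and ℓ(e) equal to the e-th standard basis vector, so that each edge is labelled by a distinct generator of the free monoid ℕ^E. Then the tropical Jacobian TroPic⁰ = Hom(H₁, ℤ^E)†/{⟨γ, −⟩ : γ ∈ H₁} is torsion-free. -/
/-! With `ℓ e` the `e`-th basis vector of `ℤ^E`, the pairing `⟨γ, γ'⟩` is the pointwise product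
`γ * γ'`. Suppose `n • φ = ⟨γ, -⟩`. Whenever a cycle is nonzero on an edge `e`, the edge is not a
bridge, so a path from `t e` to `s e` avoiding `e`, closed up by `e`, is a cycle taking the value
`1` at `e`; testing `n • φ = ⟨γ, -⟩` against it gives `n ∣ γ e`. Thus `γ = n • γ''`, where `γ''`
is again a cycle, and `φ = ⟨γ'', -⟩` because `Hom(H₁, ℤ^E)` is torsion-free. So the periods form
a saturated subgroup, and the quotient by a saturated subgroup is torsion-free. -/

namespace TropicalNeron

variable {V E : Type*} [Fintype E]
variable {G : Type*} [AddCommGroup G]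

/-- Connectedness of the graph: the equivalence relation generated by `s e ∼ t e` has a
single class. -/
def GraphConnected (s t : E → V) : Prop :=
  ∀ v w : V, Relation.EqvGen (fun a b => ∃ e, s e = a ∧ t e = b) v w

/-- The free monoid `ℕ^E ⊆ ℤ^E` of pointwise nonnegative integer-valued functions. -/
def piNonneg (E : Type*) : AddSubmonoid (E → ℤ) where
  carrier := {f | ∀ e, 0 ≤ f e}
  zero_mem' := fun e => le_refl 0
  add_mem' := fun hf hg e => add_nonneg (hf e) (hg e)

theorem _root_.AddSubgroup.nsmulSaturated_comap {A B : Type*} [AddGroup A] [AddGroup B]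
    {H : AddSubgroup B} (hH : H.NSMulSaturated) (f : A →+ B) :
    (H.comap f).NSMulSaturated := fun _ _ hna => hH (by simpa using hna)

theorem _root_.QuotientAddGroup.isAddTorsionFree_of_nsmulSaturated {A : Type*}
    [AddCommGroup A] {N : AddSubgroup A} (hN : N.NSMulSaturated) : IsAddTorsionFree (A ⧸ N) where
  nsmul_right_injective n hn x y hxy := by
    induction x using QuotientAddGroup.induction_on with | H a =>
    induction y using QuotientAddGroup.induction_on with | H b =>
    simp only [← QuotientAddGroup.mk_nsmul, QuotientAddGroup.eq, ← smul_neg, ← smul_add] at hxy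
    exact QuotientAddGroup.eq.2 ((hN hxy).resolve_left hn)

section Graph

variable (s t : E → V)

def AdjOn (S : Set E) (x y : V) : Prop := ∃ e ∈ S, s e = x ∧ t e = y

theorem delta_single [DecidableEq E] [DecidableEq V] (e : E) (k : ℤ) :
    delta s t (Pi.single e k) = Pi.single (t e) k - Pi.single (s e) k := by
  ext v
  simp only [delta, AddMonoidHom.coe_mk, ZeroHom.coe_mk, Pi.sub_apply, Pi.single_apply]
  congr 1 <;> rw [Finset.sum_eq_single e (fun b _ hb => by simp [hb]) (by simp)] <;>
    simp [eq_comm]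

theorem sum_mul_delta [Fintype V] (f : V → ℤ) (γ : E → ℤ) :
    ∑ v, f v * delta s t γ v = ∑ e, γ e * (f (t e) - f (s e)) := by
  simp only [delta, AddMonoidHom.coe_mk, ZeroHom.coe_mk, mul_sub, Finset.sum_sub_distrib,
    Finset.mul_sum, mul_ite, mul_zero]
  congr 1 <;> rw [Finset.sum_comm] <;>
    exact Finset.sum_congr rfl fun e _ => by
      rw [Finset.sum_eq_single _ (fun v _ hv => if_neg (Ne.symm hv)) (by simp), if_pos rfl,
        mul_comm]

theorem exists_delta_eq_single_sub_single [DecidableEq V] {S : Set E} {a b : V}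
    (hab : Relation.EqvGen (AdjOn s t S) a b) :
    ∃ c : E → ℤ, (∀ e ∉ S, c e = 0) ∧ delta s t c = Pi.single b 1 - Pi.single a 1 := by
  classical
  induction hab with
  | rel x y hxy =>
    obtain ⟨e, he, rfl, rfl⟩ := hxy
    exact ⟨Pi.single e 1, fun e' he' => Pi.single_eq_of_ne (ne_of_mem_of_not_mem he he').symm _,
      delta_single s t e 1⟩
  | refl x => exact ⟨0, fun _ _ => rfl, by simp⟩
  | symm x y _ ih =>
    obtain ⟨c, hcS, hc⟩ := ih
    exact ⟨-c, fun e he => by simp [hcS e he], by rw [map_neg, hc, neg_sub]⟩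
  | trans x y z _ _ ih₁ ih₂ =>
    obtain ⟨c₁, hc₁S, hc₁⟩ := ih₁
    obtain ⟨c₂, hc₂S, hc₂⟩ := ih₂
    exact ⟨c₁ + c₂, fun e he => by simp [hc₁S e he, hc₂S e he],
      by rw [map_add, hc₁, hc₂, sub_add_sub_cancel']⟩

theorem eqvGen_adjOn_compl_singleton_of_mem_H1 [Fintype V] {γ : E → ℤ} (hγ : γ ∈ H1 s t)
    {e : E} (he : γ e ≠ 0) : Relation.EqvGen (AdjOn s t {e}ᶜ) (s e) (t e) := by
  classical
  by_contra hse
  have hequiv := Relation.EqvGen.is_equivalence (AdjOn s t {e}ᶜ)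
  -- `δ γ = 0` paired with the indicator of the component of `t e` in the graph without `e`:
  -- `e` is the only edge that can leave that component.
  set f : V → ℤ := fun v => if Relation.EqvGen (AdjOn s t {e}ᶜ) v (t e) then 1 else 0
  have hf : ∀ e' ≠ e, f (s e') = f (t e') := fun e' he' => by
    have hadj : Relation.EqvGen (AdjOn s t {e}ᶜ) (s e') (t e') := .rel _ _ ⟨e', he', rfl, rfl⟩
    exact if_congr ⟨hequiv.trans (hequiv.symm hadj), hequiv.trans hadj⟩ rfl rfl
  have hsum := sum_mul_delta s t f γ
  rw [show delta s t γ = 0 from hγ, Finset.sum_eq_single e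
    (fun e' _ he' => by rw [hf e' he', sub_self, mul_zero]) (by simp)] at hsum
  have hft : f (t e) = 1 := if_pos (hequiv.refl _)
  have hfs : f (s e) = 0 := if_neg hse
  exact he (by simpa [hft, hfs] using hsum.symm)

theorem exists_mem_H1_apply_eq_one [Fintype V] {γ : E → ℤ} (hγ : γ ∈ H1 s t) {e : E}
    (he : γ e ≠ 0) : ∃ γ₀ ∈ H1 s t, γ₀ e = 1 := by
  classical
  obtain ⟨c, hcS, hc⟩ :=
    exists_delta_eq_single_sub_single s t (eqvGen_adjOn_compl_singleton_of_mem_H1 s t hγ he)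
  refine ⟨Pi.single e 1 - c, ?_, by simp [hcS e (by simp)]⟩
  rw [H1, AddMonoidHom.mem_ker, map_sub, hc, delta_single, sub_self]

theorem dvd_apply_of_forall_mem_H1_dvd_mul [Fintype V] {γ : E → ℤ} (hγ : γ ∈ H1 s t) {n : ℤ}
    (h : ∀ γ' ∈ H1 s t, ∀ e, n ∣ γ e * γ' e) (e : E) : n ∣ γ e := by
  by_cases he : γ e = 0
  · simp [he]
  obtain ⟨γ₀, hγ₀, hγ₀e⟩ := exists_mem_H1_apply_eq_one s t hγ he
  simpa [hγ₀e] using h γ₀ hγ₀ e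

theorem pairing_single_one [DecidableEq E] (γ γ' : E → ℤ) :
    pairing (fun e => (Pi.single e 1 : E → ℤ)) γ γ' = γ * γ' := by
  ext e
  simp [pairing, Finset.sum_apply, Pi.single_apply]

theorem nsmulSaturated_range_periodMap_single [Fintype V] [DecidableEq E] :
    (periodMap s t fun e => (Pi.single e 1 : E → ℤ)).range.NSMulSaturated := by
  rintro n φ ⟨γ, hγ⟩
  refine or_iff_not_imp_left.2 fun hn => ?_
  have hmul : ∀ γ' : H1 s t, (γ : E → ℤ) * γ' = (n : ℤ) • φ γ' := fun γ' => by
    rw [← pairing_single_one, natCast_zsmul]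
    exact DFunLike.congr_fun hγ γ'
  obtain ⟨c, hc⟩ : ∃ c : E → ℤ, (γ : E → ℤ) = (n : ℤ) • c := by
    choose c hc using dvd_apply_of_forall_mem_H1_dvd_mul s t γ.2
      fun γ' hγ' e => ⟨φ ⟨γ', hγ'⟩ e, congrFun (hmul ⟨γ', hγ'⟩) e⟩
    exact ⟨c, funext hc⟩
  have hcH1 : c ∈ H1 s t := by
    refine (AddSubmonoid.ker_saturated (delta s t) (n := n) ?_).resolve_left hn
    rw [← natCast_zsmul, ← hc]
    exact γ.2
  refine ⟨⟨c, hcH1⟩, ?_⟩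
  ext γ' e
  have h := congrFun (hmul γ') e
  rw [hc] at h
  simp only [Pi.mul_apply, Pi.smul_apply, smul_eq_mul, mul_assoc] at h
  rw [show periodMap s t _ ⟨c, hcH1⟩ γ' = c * γ' from pairing_single_one c γ']
  exact mul_left_cancel₀ (Int.natCast_ne_zero.2 hn) h

end Graph

theorem troPic0_torsionFree_of_distinct_generators_general
    {V E : Type*} [Fintype V] [Fintype E] [DecidableEq E]
    (s t : E → V) :
    ∀ x : TroPic0 s t (piNonneg E) (fun e => (Pi.single e 1 : E → ℤ)),
      ∀ n : ℤ, n ≠ 0 → n • x = 0 → x = 0 := by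
  have hsat := AddSubgroup.nsmulSaturated_comap (nsmulSaturated_range_periodMap_single s t)
    (BMHom s t (piNonneg E) fun e => (Pi.single e 1 : E → ℤ)).subtype
  have : IsAddTorsionFree (TroPic0 s t (piNonneg E) _) :=
    QuotientAddGroup.isAddTorsionFree_of_nsmulSaturated hsat
  exact fun x n hn hx => (IsAddTorsionFree.zsmul_eq_zero_iff_right hn).1 hx

/-- the key step of Corollary 6.6 of the paper: for a finite connected
graph with `G = ℤ^E`, `M = ℕ^E`, and each edge labelled by the corresponding standard
basis vector, the tropical Jacobian `Hom(H₁,ℤ^E)†/{⟨γ,−⟩ : γ ∈ H₁}` is torsion-free. -/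
theorem troPic0_torsionFree_of_distinct_generators
    {V E : Type*} [Fintype V] [Fintype E] [Nonempty V] [DecidableEq E]
    (s t : E → V) (hconn : GraphConnected s t) :
    ∀ x : TroPic0 s t (piNonneg E) (fun e => (Pi.single e 1 : E → ℤ)),
      ∀ n : ℤ, n ≠ 0 → n • x = 0 → x = 0 :=
  troPic0_torsionFree_of_distinct_generators_general s t

end TropicalNeron
end
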